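/- If p ≤ 1 - (log n)^2/√n, then for all sufficiently large n, the largest clique in G(n,p) has size at most 2√n · log n with probability at least 1 - e^{-(log n)^2}. -/

import Mathlib

/-! First moment method. A fixed set of `k` vertices spans a clique with probability
`p ^ (k choose 2)`, so some `k`-clique exists with probability at most
`(n choose k) p ^ (k choose 2) ≤ exp (k log n - (log n)² / √n · k (k - 1) / 2)`, using
`p ≤ 1 - x ≤ exp (-x)`. Taking `k = ⌊2 √n log n⌋ + 1`, the quadratic term beats the linear
one as soon as `log n ≥ 3`, and the exponent drops below `-(log n)²`. -/

open MeasureTheory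

/-- Bernoulli(p) measure on `Bool`. -/
noncomputable def bern (p : ℝ) : Measure Bool :=
  (Real.toNNReal p) • Measure.dirac true + (Real.toNNReal (1 - p)) • Measure.dirac false

instance (p : ℝ) : IsFiniteMeasure (bern p) := by
  unfold bern; infer_instance

/-- The Erdős–Rényi measure: each potential edge (element of `Sym2 (Fin n)`)
is present (`true`) independently with probability `p`. -/
noncomputable def erMeasure (n : ℕ) (p : ℝ) : Measure (Sym2 (Fin n) → Bool) :=
  Measure.pi fun _ => bern p

/-- The random graph determined by the sample point `ω`. -/
def erGraph (n : ℕ) (ω : Sym2 (Fin n) → Bool) : SimpleGraph (Fin n) :=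
  SimpleGraph.fromEdgeSet {e | ω e = true}

/-- Degree of a vertex. -/
noncomputable def degN {V : Type*} (G : SimpleGraph V) (v : V) : ℕ :=
  Nat.card (G.neighborSet v)

/-- Number of odd-degree vertices. -/
noncomputable def oddCount (n : ℕ) (ω : Sym2 (Fin n) → Bool) : ℕ :=
  Nat.card {v : Fin n // Odd (degN (erGraph n ω) v)}

open SimpleGraph Finset
open scoped ENNReal

lemma SimpleGraph.IsClique.card_lt_of_cliqueFree {α : Type*} {G : SimpleGraph α}
    {s : Finset α} {k : ℕ} (hG : G.CliqueFree k) (hs : G.IsClique (s : Set α)) : #s < k := by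
  by_contra! hks
  obtain ⟨t, hts, htk⟩ := exists_subset_card_eq hks
  exact hG t ⟨hs.subset (coe_subset.2 hts), htk⟩

lemma bern_singleton_true (p : ℝ) : bern p {true} = ENNReal.ofReal p := by
  simp [bern, ENNReal.ofReal]

lemma isProbabilityMeasure_bern {p : ℝ} (h0 : 0 ≤ p) (h1 : p ≤ 1) :
    IsProbabilityMeasure (bern p) := by
  constructor
  simp only [bern, Measure.add_apply, Measure.smul_apply, measure_univ, ENNReal.smul_def,
    smul_eq_mul, mul_one]
  rw [← ENNReal.ofReal, ← ENNReal.ofReal, ← ENNReal.ofReal_add h0 (by linarith)]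
  simp

lemma isProbabilityMeasure_erMeasure {n : ℕ} {p : ℝ} (h0 : 0 ≤ p) (h1 : p ≤ 1) :
    IsProbabilityMeasure (erMeasure n p) :=
  have := isProbabilityMeasure_bern h0 h1
  Measure.pi.instIsProbabilityMeasure _

lemma erMeasure_forall_mem_eq_true {n : ℕ} {p : ℝ} (h0 : 0 ≤ p) (h1 : p ≤ 1)
    (E : Finset (Sym2 (Fin n))) :
    erMeasure n p {ω | ∀ e ∈ E, ω e = true} = ENNReal.ofReal p ^ #E := by
  have hcyl : {ω : Sym2 (Fin n) → Bool | ∀ e ∈ E, ω e = true}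
      = Set.pi Set.univ (fun e => if e ∈ E then {true} else Set.univ) := by
    ext ω
    simp only [Set.mem_pi, Set.mem_univ, true_implies, Set.mem_ofPred_eq]
    refine forall_congr' fun e => ?_
    split_ifs <;> simp [*]
  have := isProbabilityMeasure_bern h0 h1
  rw [erMeasure, hcyl, Measure.pi_pi]
  simp_rw [apply_ite (bern p), bern_singleton_true, measure_univ]
  rw [prod_ite_mem, univ_inter, prod_const]

lemma erGraph_isClique_iff {n : ℕ} (ω : Sym2 (Fin n) → Bool) (t : Finset (Fin n)) :
    (erGraph n ω).IsClique (t : Set (Fin n)) ↔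
      ∀ e ∈ t.offDiag.image (Function.uncurry Sym2.mk), ω e = true := by
  simp only [isClique_iff, Set.Pairwise, mem_coe, erGraph, fromEdgeSet_adj, Set.mem_ofPred_eq,
    mem_image, mem_offDiag, Prod.exists, Function.uncurry_apply_pair]
  constructor
  · rintro h e ⟨a, b, ⟨ha, hb, hab⟩, rfl⟩
    exact (h ha hb hab).1
  · exact fun h a ha b hb hab => ⟨h _ ⟨a, b, ⟨ha, hb, hab⟩, rfl⟩, hab⟩

lemma erMeasure_not_cliqueFree_le {n : ℕ} {p : ℝ} (h0 : 0 ≤ p) (h1 : p ≤ 1) (k : ℕ) :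
    erMeasure n p {ω | ¬ (erGraph n ω).CliqueFree k}
      ≤ n.choose k * ENNReal.ofReal p ^ k.choose 2 := by
  have hcover : {ω | ¬ (erGraph n ω).CliqueFree k} ⊆ ⋃ t ∈ univ.powersetCard k,
      {ω | ∀ e ∈ t.offDiag.image (Function.uncurry Sym2.mk), ω e = true} := by
    intro ω hω
    obtain ⟨t, ht⟩ : ∃ t, (erGraph n ω).IsNClique k t := by
      simpa [CliqueFree] using hω
    exact Set.mem_biUnion (mem_powersetCard.2 ⟨subset_univ t, ht.card_eq⟩)
      ((erGraph_isClique_iff ω t).1 ht.isClique)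
  calc _ ≤ ∑ t ∈ univ.powersetCard k, erMeasure n p
          {ω | ∀ e ∈ t.offDiag.image (Function.uncurry Sym2.mk), ω e = true} :=
        (measure_mono hcover).trans (measure_biUnion_finset_le _ _)
    _ = ∑ t ∈ univ.powersetCard k, ENNReal.ofReal p ^ k.choose 2 := by
        refine sum_congr rfl fun t ht => ?_
        rw [erMeasure_forall_mem_eq_true h0 h1, Sym2.card_image_offDiag,
          (mem_powersetCard.1 ht).2]
    _ = n.choose k * ENNReal.ofReal p ^ k.choose 2 := by
        rw [sum_const, card_powersetCard, card_univ, Fintype.card_fin, nsmul_eq_mul]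

lemma one_sub_le_erMeasure_cliqueFree {n : ℕ} {p : ℝ} (h0 : 0 ≤ p) (h1 : p ≤ 1) (k : ℕ) :
    1 - n.choose k * ENNReal.ofReal p ^ k.choose 2
      ≤ erMeasure n p {ω | (erGraph n ω).CliqueFree k} := by
  have := isProbabilityMeasure_erMeasure (n := n) h0 h1
  calc 1 - n.choose k * ENNReal.ofReal p ^ k.choose 2
      ≤ 1 - erMeasure n p {ω | ¬ (erGraph n ω).CliqueFree k} :=
        tsub_le_tsub_left (erMeasure_not_cliqueFree_le h0 h1 k) 1
    _ = erMeasure n p {ω | (erGraph n ω).CliqueFree k} := by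
        rw [← prob_compl_eq_one_sub (DiscreteMeasurableSpace.forall_measurableSet _),
          Set.compl_ofPred]
        simp_rw [not_not]

lemma choose_mul_pow_choose_two_le_exp {n : ℕ} (hn : 0 < n) (k : ℕ) {p x : ℝ} (h0 : 0 ≤ p)
    (hpx : p ≤ Real.exp (-x)) :
    n.choose k * p ^ k.choose 2 ≤ Real.exp (k * Real.log n - x * (k * (k - 1) / 2)) := by
  have hchoose : (n.choose k : ℝ) ≤ Real.exp (k * Real.log n) := by
    rw [← Real.log_pow, Real.exp_log (by positivity)]
    exact_mod_cast Nat.choose_le_pow n k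
  have hpow : p ^ k.choose 2 ≤ Real.exp (-(x * (k * (k - 1) / 2))) :=
    calc p ^ k.choose 2 ≤ Real.exp (-x) ^ k.choose 2 := pow_le_pow_left₀ h0 hpx _
      _ = Real.exp (-(x * (k * (k - 1) / 2))) := by
        rw [← Real.exp_nat_mul, Nat.cast_choose_two]; ring_nf
  calc (n.choose k : ℝ) * p ^ k.choose 2
      ≤ Real.exp (k * Real.log n) * Real.exp (-(x * (k * (k - 1) / 2))) :=
        mul_le_mul hchoose hpow (by positivity) (Real.exp_pos _).le
    _ = _ := by rw [← Real.exp_add]; ring_nf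

lemma clique_exponent_le {L r k : ℝ} (hL : 3 ≤ L) (hr : 1 ≤ r) (hk : 2 * r * L ≤ k) :
    k * L - L ^ 2 / r * (k * (k - 1) / 2) ≤ -L ^ 2 := by
  have hrL : 3 ≤ r * L := by nlinarith
  have hkL : L ≤ k := by nlinarith
  have hquad : k * L ^ 3 / 2 ≤ L ^ 2 / r * (k * (k - 1) / 2) :=
    calc k * L ^ 3 / 2 = L ^ 2 * k / (2 * r) * (r * L) := by field_simp
      _ ≤ L ^ 2 * k / (2 * r) * (k - 1) := by
        have hk0 : 0 ≤ k := by linarith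
        exact mul_le_mul_of_nonneg_left (by linarith) (by positivity)
      _ = L ^ 2 / r * (k * (k - 1) / 2) := by ring
  have hcubic : k * L + L ^ 2 ≤ k * L ^ 3 / 2 := by
    have : L * L * (L ^ 2 - 2) ≤ k * L * (L ^ 2 - 2) := by gcongr; nlinarith
    nlinarith [mul_nonneg (sq_nonneg L) (by nlinarith : (0:ℝ) ≤ L ^ 2 - 4)]
  linarith

lemma choose_mul_pow_choose_two_le_exp_neg_log_sq {n k : ℕ} (hn : Real.exp 3 ≤ n)
    (hk : 2 * Real.sqrt n * Real.log n ≤ k) {p : ℝ} (h0 : 0 ≤ p)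
    (hp : p ≤ 1 - Real.log n ^ 2 / Real.sqrt n) :
    n.choose k * p ^ k.choose 2 ≤ Real.exp (-Real.log n ^ 2) := by
  have hnpos : 0 < n := by exact_mod_cast (Real.exp_pos 3).trans_le hn
  have hL : 3 ≤ Real.log n := (Real.le_log_iff_exp_le (by positivity)).2 hn
  have hr : 1 ≤ Real.sqrt n := Real.one_le_sqrt.2 (by exact_mod_cast hnpos)
  have hpx : p ≤ Real.exp (-(Real.log n ^ 2 / Real.sqrt n)) :=
    hp.trans (by linarith [Real.add_one_le_exp (-(Real.log n ^ 2 / Real.sqrt n))])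
  exact (choose_mul_pow_choose_two_le_exp hnpos k h0 hpx).trans
    (Real.exp_le_exp.2 (clique_exponent_le hL hr hk))

/-- If `p ≤ 1 - (log n)^2/√n`, then for all large `n` the largest clique of
`G(n,p)` has size at most `2√n log n`, with probability at least `1 - e^(-(log n)^2)`. -/
theorem clique_number_whp :
    ∃ n0 : ℕ, ∀ n : ℕ, n0 ≤ n → ∀ p : ℝ,
      0 ≤ p → p ≤ 1 - (Real.log n) ^ 2 / Real.sqrt n →
      ENNReal.ofReal (1 - Real.exp (-(Real.log n) ^ 2))
        ≤ erMeasure n p {ω | ∀ s : Finset (Fin n),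
            (erGraph n ω).IsClique (s : Set (Fin n)) →
            (s.card : ℝ) ≤ 2 * Real.sqrt n * Real.log n} := by
  refine ⟨⌈Real.exp 3⌉₊, fun n hn p h0 hp => ?_⟩
  have hp1 : p ≤ 1 := hp.trans (sub_le_self _ (by positivity))
  set k := ⌊2 * Real.sqrt n * Real.log n⌋₊ + 1
  have hk : 2 * Real.sqrt n * Real.log n ≤ k := by
    simpa [k] using (Nat.lt_floor_add_one (2 * Real.sqrt n * Real.log n)).le
  have hbound := choose_mul_pow_choose_two_le_exp_neg_log_sq (Nat.ceil_le.1 hn) hk h0 hp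
  calc ENNReal.ofReal (1 - Real.exp (-Real.log n ^ 2))
      = 1 - ENNReal.ofReal (Real.exp (-Real.log n ^ 2)) := by
        rw [ENNReal.ofReal_sub _ (Real.exp_nonneg _), ENNReal.ofReal_one]
    _ ≤ 1 - n.choose k * ENNReal.ofReal p ^ k.choose 2 := by
        rw [← ENNReal.ofReal_natCast, ← ENNReal.ofReal_pow h0, ← ENNReal.ofReal_mul (by positivity)]
        exact tsub_le_tsub_left (ENNReal.ofReal_le_ofReal hbound) 1
    _ ≤ erMeasure n p {ω | (erGraph n ω).CliqueFree k} := one_sub_le_erMeasure_cliqueFree h0 hp1 k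
    _ ≤ _ := by
        refine measure_mono fun ω hG s hs => ?_
        exact (Nat.le_floor_iff (by positivity)).1
          (Nat.lt_add_one_iff.1 (hs.card_lt_of_cliqueFree hG))
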